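/- Let C be a (possibly shortened) proper array code with modulus q, three block-rows (column-weight r = 3) and retained block-column label set S ⊆ [0,q−1]. The Tanner graph of C contains a cycle of length eight passing through four distinct block-columns with labels in S if and only if there exist four distinct labels i, j, k, l ∈ S satisfying i − j − k + l ≡ 0 (mod q) or 2i − j − 2k + l ≡ 0 (mod q); and it contains a cycle of length eight passing through exactly three distinct block-columns with labels in S if and only if there exist three distinct labels i, j, k ∈ S satisfying 2i + j − 3k ≡ 0 (mod q) or 2i − j − k ≡ 0 (mod q). -/

import Mathlib

/-- The Tanner graph of a (possibly shortened) array code with modulus `q`,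
block-row labels `a 0, …, a (r-1)` (elements of `ZMod q`), and retained
block-column label set `S ⊆ ZMod q`.  Row vertices are pairs `(i, x)`
(block-row `i`, row `x` within the block); column vertices are pairs `(j, y)`
with `j ∈ S` (block-column labeled `j`, column `y` within the block).
A row `(i, x)` is adjacent to a column `(j, y)` iff the corresponding entry of
the parity-check matrix, i.e. entry `(x, y)` of `P ^ (a i * j)`, equals `1`,
which happens iff `y = x + a i * j`. -/
def tannerGraph (q r : ℕ) (a : Fin r → ZMod q) (S : Finset (ZMod q)) :
    SimpleGraph ((Fin r × ZMod q) ⊕ ({j // j ∈ S} × ZMod q)) where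
  Adj u v :=
    match u, v with
    | Sum.inl (i, x), Sum.inr (j, y) => y = x + a i * (j : ZMod q)
    | Sum.inr (j, y), Sum.inl (i, x) => y = x + a i * (j : ZMod q)
    | _, _ => False
  symm := by
    constructor
    rintro (⟨i, x⟩ | ⟨j, y⟩) (⟨i', x'⟩ | ⟨j', y'⟩) h <;> simp_all
  loopless := by
    constructor
    rintro (⟨i, x⟩ | ⟨j, y⟩) h <;> simp_all

/-- The set of block-column labels visited by a list of vertices of the Tanner
graph (e.g. the support of a walk): a cycle "passes through" the block-columns
whose labels appear in this set. -/
def colLabels {q r : ℕ} {S : Finset (ZMod q)}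
    (l : List ((Fin r × ZMod q) ⊕ ({j // j ∈ S} × ZMod q))) : Finset (ZMod q) :=
  (l.filterMap (fun v => match v with
    | Sum.inl _ => none
    | Sum.inr (j, _) => some (j : ZMod q))).toFinset

/-!
Going once around an 8-cycle of the Tanner graph, the in-block offsets telescope: the cycle
visits block-rows `i₀, i₁, i₂, i₃` and block-columns `j₀, j₁, j₂, j₃` (cyclically adjacent
labels distinct) with `∑ₖ (a iₖ - a iₖ₊₁) jₖ = 0`. Conversely such labels lift to an 8-cycle,
because in a prime field every potential repeated vertex is separated by a nonzero product
`(a x - a y) (j - j')`. With three block-rows two opposite rows of the cycle share a block-row,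
so after a rotation the rows are `x, y, x, z` and the condition reads
`(a x - a y) s + (a x - a z) t = 0` with `s = j₀ - j₁`, `t = j₂ - j₃`. For an arithmetic
progression this is a multiple by `±d` or `±2d` of one of `s + t`, `s - t`, `s + 2t`, `2s + t`,
and the number of block-columns the cycle passes through is four minus the number of
coincidences among `j₀ = j₂`, `j₁ = j₃`; sorting out the resulting cases gives the stated
relations.
-/

open SimpleGraph Function

section TannerGraph

variable {q r : ℕ} {a : Fin r → ZMod q} {S : Finset (ZMod q)}

lemma tannerGraph_adj_inl_inr {i : Fin r} {x : ZMod q} {j : {j // j ∈ S}} {y : ZMod q} :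
    (tannerGraph q r a S).Adj (.inl (i, x)) (.inr (j, y)) ↔ y = x + a i * j := Iff.rfl

lemma exists_eq_inr_of_adj_inl {i : Fin r} {x : ZMod q} {w}
    (h : (tannerGraph q r a S).Adj (.inl (i, x)) w) :
    ∃ j y, w = .inr (j, y) ∧ y = x + a i * j := by
  rcases w with _ | ⟨j, y⟩
  · exact h.elim
  · exact ⟨j, y, rfl, h⟩

lemma exists_eq_inl_of_adj_inr {j : {j // j ∈ S}} {y : ZMod q} {w}
    (h : (tannerGraph q r a S).Adj (.inr (j, y)) w) :
    ∃ i x, w = .inl (i, x) ∧ y = x + a i * j := by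
  rcases w with ⟨i, x⟩ | _
  · exact ⟨i, x, rfl, h⟩
  · exact h.elim

lemma blockRow_ne_of_common_neighbor {i i' : Fin r} {x x' : ZMod q} {j : {j // j ∈ S}}
    {y : ZMod q} (h : (tannerGraph q r a S).Adj (.inl (i, x)) (.inr (j, y)))
    (h' : (tannerGraph q r a S).Adj (.inl (i', x')) (.inr (j, y)))
    (hne : (.inl (i, x) : (Fin r × ZMod q) ⊕ ({j // j ∈ S} × ZMod q)) ≠ .inl (i', x')) :
    i ≠ i' := by
  rintro rfl
  rw [tannerGraph_adj_inl_inr] at h h'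
  exact hne (by rw [add_right_cancel (h.symm.trans h')])

lemma blockCol_ne_of_common_neighbor {i : Fin r} {x : ZMod q} {j j' : {j // j ∈ S}}
    {y y' : ZMod q} (h : (tannerGraph q r a S).Adj (.inl (i, x)) (.inr (j, y)))
    (h' : (tannerGraph q r a S).Adj (.inl (i, x)) (.inr (j', y')))
    (hne : (.inr (j, y) : (Fin r × ZMod q) ⊕ ({j // j ∈ S} × ZMod q)) ≠ .inr (j', y')) :
    (j : ZMod q) ≠ j' := by
  intro hj
  obtain rfl := Subtype.ext hj
  rw [tannerGraph_adj_inl_inr] at h h'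
  exact hne (by rw [h, h'])

lemma colLabels_congr {l l' : List ((Fin r × ZMod q) ⊕ ({j // j ∈ S} × ZMod q))}
    (h : ∀ w, w ∈ l ↔ w ∈ l') : colLabels l = colLabels l' := by
  ext z
  simp [colLabels, h]

lemma exists_isCycle_at_inl {v} (c : (tannerGraph q r a S).Walk v v) (hc : c.IsCycle) :
    ∃ i x, ∃ c' : (tannerGraph q r a S).Walk (.inl (i, x)) (.inl (i, x)),
      c'.IsCycle ∧ c'.length = c.length ∧ colLabels c'.support = colLabels c.support := by
  rcases v with ⟨i, x⟩ | ⟨j, y⟩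
  · exact ⟨i, x, c, hc, rfl, rfl⟩
  cases c with
  | nil => exact absurd rfl hc.ne_nil
  | cons h p =>
    obtain ⟨i, x, rfl, -⟩ := exists_eq_inl_of_adj_inr h
    have hmem : .inl (i, x) ∈ (Walk.cons h p).support := by simp
    exact ⟨i, x, _, hc.rotate hmem, by simp, colLabels_congr (by simp)⟩

lemma exists_blockLabels_of_isCycle {i₀ : Fin r} {x₀ : ZMod q}
    (c : (tannerGraph q r a S).Walk (.inl (i₀, x₀)) (.inl (i₀, x₀)))
    (hc : c.IsCycle) (hl : c.length = 8) :
    ∃ (i₁ i₂ i₃ : Fin r) (j₀ j₁ j₂ j₃ : {j // j ∈ S}),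
      i₀ ≠ i₁ ∧ i₁ ≠ i₂ ∧ i₂ ≠ i₃ ∧ i₃ ≠ i₀ ∧
      (j₀ : ZMod q) ≠ j₁ ∧ (j₁ : ZMod q) ≠ j₂ ∧ (j₂ : ZMod q) ≠ j₃ ∧ (j₃ : ZMod q) ≠ j₀ ∧
      (a i₀ - a i₁) * j₀ + (a i₁ - a i₂) * j₁ + (a i₂ - a i₃) * j₂ + (a i₃ - a i₀) * j₃ = 0 ∧
      colLabels c.support = {(j₀ : ZMod q), (j₁ : ZMod q), (j₂ : ZMod q), (j₃ : ZMod q)} := by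
  rcases c with _ | @⟨_, w₁, _, h₁, _ | @⟨_, w₂, _, h₂, _ | @⟨_, w₃, _, h₃,
    _ | @⟨_, w₄, _, h₄, _ | @⟨_, w₅, _, h₅, _ | @⟨_, w₆, _, h₆, _ | @⟨_, w₇, _, h₇,
    _ | @⟨_, _, _, h₈, _ | ⟨_, _⟩⟩⟩⟩⟩⟩⟩⟩⟩
    <;> simp only [Walk.length_cons, Walk.length_nil] at hl <;> try omega
  obtain ⟨j₀, y₀, rfl, -⟩ := exists_eq_inr_of_adj_inl h₁
  obtain ⟨i₁, x₁, rfl, -⟩ := exists_eq_inl_of_adj_inr h₂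
  obtain ⟨j₁, y₁, rfl, -⟩ := exists_eq_inr_of_adj_inl h₃
  obtain ⟨i₂, x₂, rfl, -⟩ := exists_eq_inl_of_adj_inr h₄
  obtain ⟨j₂, y₂, rfl, -⟩ := exists_eq_inr_of_adj_inl h₅
  obtain ⟨i₃, x₃, rfl, -⟩ := exists_eq_inl_of_adj_inr h₆
  obtain ⟨j₃, y₃, rfl, -⟩ := exists_eq_inr_of_adj_inl h₇
  have hnd := hc.support_nodup
  simp only [Walk.support_cons, Walk.support_nil, List.tail_cons, List.nodup_cons, List.mem_cons,
    List.not_mem_nil, or_false, not_or, List.nodup_nil, not_false_eq_true, and_true] at hnd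
  obtain ⟨⟨-, col₀₁, -, -, -, col₀₃, -⟩, ⟨-, row₁₂, -, -, -, row₁₀⟩, ⟨-, col₁₂, -, -, -⟩,
    ⟨-, row₂₃, -, -⟩, ⟨-, col₂₃, -⟩, ⟨-, row₃₀⟩, -⟩ := hnd
  refine ⟨i₁, i₂, i₃, j₀, j₁, j₂, j₃,
    blockRow_ne_of_common_neighbor h₁ h₂.symm (Ne.symm row₁₀),
    blockRow_ne_of_common_neighbor h₃ h₄.symm row₁₂,
    blockRow_ne_of_common_neighbor h₅ h₆.symm row₂₃,
    blockRow_ne_of_common_neighbor h₇ h₈.symm row₃₀,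
    blockCol_ne_of_common_neighbor h₂.symm h₃ col₀₁,
    blockCol_ne_of_common_neighbor h₄.symm h₅ col₁₂,
    blockCol_ne_of_common_neighbor h₆.symm h₇ col₂₃,
    blockCol_ne_of_common_neighbor h₈.symm h₁ (Ne.symm col₀₃), ?_, by simp [colLabels]⟩
  rw [tannerGraph_adj_inl_inr] at h₁ h₃ h₅ h₇
  rw [adj_comm, tannerGraph_adj_inl_inr] at h₂ h₄ h₆ h₈
  linear_combination h₂ - h₁ + h₄ - h₃ + h₆ - h₅ + h₈ - h₇

lemma exists_isCycle_of_blockLabels [Fact q.Prime] (ha : Injective a) {x y z : Fin r}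
    (hy : y ≠ x) (hz : z ≠ x) {j₀ j₁ j₂ j₃ : {j // j ∈ S}}
    (h₀₁ : (j₀ : ZMod q) ≠ j₁) (h₁₂ : (j₁ : ZMod q) ≠ j₂) (h₂₃ : (j₂ : ZMod q) ≠ j₃)
    (h₃₀ : (j₃ : ZMod q) ≠ j₀)
    (hrel : (a x - a y) * (j₀ - j₁) + (a x - a z) * (j₂ - j₃) = 0) :
    ∃ v, ∃ c : (tannerGraph q r a S).Walk v v, c.IsCycle ∧ c.length = 8 ∧
      colLabels c.support = {(j₀ : ZMod q), (j₁ : ZMod q), (j₂ : ZMod q), (j₃ : ZMod q)} := by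
  have hxy : a x - a y ≠ 0 := sub_ne_zero.mpr (ha.ne hy.symm)
  -- `D` is the offset between the two visits to block-row `x`; each vertex that could repeat
  -- is kept apart by `D ≠ 0` or by `j₃ ≠ j₀`.
  set D := (a x - a y) * (j₀ - j₁) with hD
  have hD0 : D ≠ 0 := mul_ne_zero hxy (sub_ne_zero.mpr h₀₁)
  let G := tannerGraph q r a S
  have e₁ : G.Adj (.inl (x, 0)) (.inr (j₀, a x * j₀)) := by
    rw [tannerGraph_adj_inl_inr]; ring
  have e₂ : G.Adj (.inr (j₀, a x * j₀)) (.inl (y, (a x - a y) * j₀)) := by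
    rw [adj_comm, tannerGraph_adj_inl_inr]; ring
  have e₃ : G.Adj (.inl (y, (a x - a y) * j₀)) (.inr (j₁, (a x - a y) * j₀ + a y * j₁)) := rfl
  have e₄ : G.Adj (.inr (j₁, (a x - a y) * j₀ + a y * j₁)) (.inl (x, D)) := by
    rw [adj_comm, tannerGraph_adj_inl_inr]; ring
  have e₅ : G.Adj (.inl (x, D)) (.inr (j₂, D + a x * j₂)) := rfl
  have e₆ : G.Adj (.inr (j₂, D + a x * j₂)) (.inl (z, (a x - a z) * j₃)) := by
    rw [adj_comm, tannerGraph_adj_inl_inr]; linear_combination hrel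
  have e₇ : G.Adj (.inl (z, (a x - a z) * j₃)) (.inr (j₃, a x * j₃)) := by
    rw [tannerGraph_adj_inl_inr]; ring
  have e₈ : G.Adj (.inr (j₃, a x * j₃)) (.inl (x, 0)) := by
    rw [adj_comm, tannerGraph_adj_inl_inr]; ring
  refine ⟨_, .cons e₁ <| .cons e₂ <| .cons e₃ <| .cons e₄ <| .cons e₅ <| .cons e₆ <| .cons e₇ <|
    .cons e₈ .nil, ?_, rfl, by simp [colLabels]⟩
  simp only [Walk.isCycle_iff_isPath_tail_and_le_length, Walk.tail_cons, Walk.getVert_cons_succ,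
    Walk.isPath_copy, Walk.cons_isPath_iff, Walk.isPath_iff_nil, Walk.nil_nil, Walk.support_cons,
    Walk.support_nil, Walk.length_cons, Walk.length_nil, List.mem_cons, List.not_mem_nil,
    Sum.inl.injEq, Sum.inr.injEq, Prod.mk.injEq, reduceCtorEq, hy, hz, hz.symm, hD0,
    ne_of_apply_ne Subtype.val h₀₁, ne_of_apply_ne Subtype.val h₁₂, ne_of_apply_ne Subtype.val h₂₃,
    ne_of_apply_ne Subtype.val h₃₀.symm, false_and, and_false, or_false, false_or, not_and,
    not_false_eq_true, Nat.reduceAdd, Nat.reduceLeDiff, true_and, and_true]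
  refine ⟨⟨?_, ?_⟩, ?_⟩
  · rintro rfl h
    exact hD0 (by linear_combination hD + h)
  · rintro rfl h
    exact h₃₀ (mul_left_cancel₀ hxy h).symm
  · rintro rfl h
    exact hD0 (by linear_combination -h)

end TannerGraph

theorem exists_isCycle_length_eight_iff {q : ℕ} [Fact q.Prime] {a : Fin 3 → ZMod q}
    (ha : Injective a) (S : Finset (ZMod q)) (P : Finset (ZMod q) → Prop) :
    (∃ v, ∃ c : (tannerGraph q 3 a S).Walk v v,
        c.IsCycle ∧ c.length = 8 ∧ P (colLabels c.support)) ↔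
      ∃ j₀ ∈ S, ∃ j₁ ∈ S, ∃ j₂ ∈ S, ∃ j₃ ∈ S, j₀ ≠ j₁ ∧ j₁ ≠ j₂ ∧ j₂ ≠ j₃ ∧ j₃ ≠ j₀ ∧
        (∃ x y z : Fin 3, y ≠ x ∧ z ≠ x ∧ (a x - a y) * (j₀ - j₁) + (a x - a z) * (j₂ - j₃) = 0) ∧
        P {j₀, j₁, j₂, j₃} := by
  constructor
  · rintro ⟨v, c, hc, hl, hP⟩
    obtain ⟨i₀, x₀, c', hc', hl', hlabels⟩ := exists_isCycle_at_inl c hc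
    obtain ⟨i₁, i₂, i₃, j₀, j₁, j₂, j₃, hi₀₁, hi₁₂, hi₂₃, hi₃₀, h₀₁, h₁₂, h₂₃, h₃₀, hsum, hcol⟩ :=
      exists_blockLabels_of_isCycle c' hc' (hl' ▸ hl)
    rw [← hlabels, hcol] at hP
    obtain rfl | rfl : i₀ = i₂ ∨ i₁ = i₃ := by omega
    · exact ⟨j₀, j₀.2, j₁, j₁.2, j₂, j₂.2, j₃, j₃.2, h₀₁, h₁₂, h₂₃, h₃₀,
        ⟨i₀, i₁, i₃, hi₀₁.symm, hi₃₀, by linear_combination hsum⟩, hP⟩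
    · refine ⟨j₁, j₁.2, j₂, j₂.2, j₃, j₃.2, j₀, j₀.2, h₁₂, h₂₃, h₃₀, h₀₁,
        ⟨i₁, i₂, i₀, hi₁₂.symm, hi₀₁, by linear_combination hsum⟩, ?_⟩
      convert hP using 1
      ext
      simp only [Finset.mem_insert, Finset.mem_singleton]
      tauto
  · rintro ⟨j₀, h₀, j₁, h₁, j₂, h₂, j₃, h₃, h₀₁, h₁₂, h₂₃, h₃₀, ⟨x, y, z, hy, hz, hrel⟩, hP⟩
    obtain ⟨v, c, hc, hl, hcol⟩ := exists_isCycle_of_blockLabels (j₀ := ⟨j₀, h₀⟩)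
      (j₁ := ⟨j₁, h₁⟩) (j₂ := ⟨j₂, h₂⟩) (j₃ := ⟨j₃, h₃⟩) ha hy hz h₀₁ h₁₂ h₂₃ h₃₀ hrel
    exact ⟨v, c, hc, hl, hcol ▸ hP⟩

section Labels

open Finset

lemma card_quadruple_of_cyclic_ne {α : Type*} [DecidableEq α] {j₀ j₁ j₂ j₃ : α}
    (h₀₁ : j₀ ≠ j₁) (h₁₂ : j₁ ≠ j₂) (h₂₃ : j₂ ≠ j₃) (h₃₀ : j₃ ≠ j₀) :
    #{j₀, j₁, j₂, j₃} = 4 - (if j₀ = j₂ then 1 else 0) - (if j₁ = j₃ then 1 else 0) := by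
  split_ifs <;> subst_vars <;>
    simp [card_insert_of_notMem, *, h₀₁.symm, h₁₂.symm, h₂₃.symm, h₃₀.symm]

variable {R : Type*} [CommRing R]

lemma exists_rowTriple_relation_iff [NoZeroDivisors R] {a : Fin 3 → R} {a₀ d : R}
    (hAP : ∀ i : Fin 3, a i = a₀ + (i : ℕ) * d) (hd : d ≠ 0) (h2 : (2 : R) ≠ 0) (s t : R) :
    (∃ x y z : Fin 3, y ≠ x ∧ z ≠ x ∧ (a x - a y) * s + (a x - a z) * t = 0) ↔
      s + t = 0 ∨ s - t = 0 ∨ s + 2 * t = 0 ∨ 2 * s + t = 0 := by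
  constructor
  · rintro ⟨x, y, z, hy, hz, h⟩
    have h' : d * ((((x : ℕ) : R) - (y : ℕ)) * s + (((x : ℕ) : R) - (z : ℕ)) * t) = 0 := by
      rw [← h, hAP, hAP, hAP]; ring
    replace h' := (mul_eq_zero.mp h').resolve_left hd
    -- each of the twelve triples turns `h'` into `±1` or `±2` times one of the four relations
    fin_cases x <;> fin_cases y <;> fin_cases z <;> simp at hy hz h' ⊢
    all_goals first
      | grind
      | exact Or.inl (mul_left_cancel₀ h2 (by linear_combination h'))
      | exact Or.inl (mul_left_cancel₀ h2 (by linear_combination -h'))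
  · rintro (h | h | h | h)
    · exact ⟨1, 0, 0, by decide, by decide, by simp [hAP]; linear_combination d * h⟩
    · exact ⟨1, 0, 2, by decide, by decide, by simp [hAP]; linear_combination d * h⟩
    · exact ⟨2, 1, 0, by decide, by decide, by simp [hAP]; linear_combination d * h⟩
    · exact ⟨2, 0, 1, by decide, by decide, by simp [hAP]; linear_combination d * h⟩

variable [DecidableEq R] {S : Finset R}

lemma exists_cyclic_labels_card_four_iff :
    (∃ j₀ ∈ S, ∃ j₁ ∈ S, ∃ j₂ ∈ S, ∃ j₃ ∈ S, j₀ ≠ j₁ ∧ j₁ ≠ j₂ ∧ j₂ ≠ j₃ ∧ j₃ ≠ j₀ ∧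
        ((j₀ - j₁) + (j₂ - j₃) = 0 ∨ (j₀ - j₁) - (j₂ - j₃) = 0 ∨
          (j₀ - j₁) + 2 * (j₂ - j₃) = 0 ∨ 2 * (j₀ - j₁) + (j₂ - j₃) = 0) ∧
        #{j₀, j₁, j₂, j₃} = 4) ↔
      ∃ i ∈ S, ∃ j ∈ S, ∃ k ∈ S, ∃ l ∈ S, i ≠ j ∧ i ≠ k ∧ i ≠ l ∧ j ≠ k ∧ j ≠ l ∧ k ≠ l ∧
        (i - j - k + l = 0 ∨ 2 * i - j - 2 * k + l = 0) := by
  constructor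
  · rintro ⟨j₀, h₀, j₁, h₁, j₂, h₂, j₃, h₃, h₀₁, h₁₂, h₂₃, h₃₀, hrel, hcard⟩
    rw [card_quadruple_of_cyclic_ne h₀₁ h₁₂ h₂₃ h₃₀] at hcard
    obtain ⟨h₀₂, h₁₃⟩ : j₀ ≠ j₂ ∧ j₁ ≠ j₃ := by split_ifs at hcard <;> simp_all
    rcases hrel with h | h | h | h
    · exact ⟨j₀, h₀, j₁, h₁, j₃, h₃, j₂, h₂, h₀₁, h₃₀.symm, h₀₂, h₁₃, h₁₂, h₂₃.symm,
        Or.inl (by linear_combination h)⟩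
    · exact ⟨j₀, h₀, j₁, h₁, j₂, h₂, j₃, h₃, h₀₁, h₀₂, h₃₀.symm, h₁₂, h₁₃, h₂₃,
        Or.inl (by linear_combination h)⟩
    · exact ⟨j₂, h₂, j₁, h₁, j₃, h₃, j₀, h₀, h₁₂.symm, h₂₃, Ne.symm h₀₂, h₁₃, h₀₁.symm, h₃₀,
        Or.inr (by linear_combination h)⟩
    · exact ⟨j₀, h₀, j₃, h₃, j₁, h₁, j₂, h₂, h₃₀.symm, h₀₁, h₀₂, Ne.symm h₁₃, h₂₃.symm, h₁₂,
        Or.inr (by linear_combination h)⟩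
  · rintro ⟨i, hi, j, hj, k, hk, l, hl, hij, hik, hil, hjk, hjl, hkl, h | h⟩
    · refine ⟨i, hi, j, hj, k, hk, l, hl, hij, hjk, hkl, hil.symm,
        Or.inr (Or.inl (by linear_combination h)), ?_⟩
      rw [card_quadruple_of_cyclic_ne hij hjk hkl hil.symm]
      simp [hik, hjl]
    · refine ⟨i, hi, k, hk, l, hl, j, hj, hik, hkl, hjl.symm, hij.symm,
        Or.inr (Or.inr (Or.inr (by linear_combination h))), ?_⟩
      rw [card_quadruple_of_cyclic_ne hik hkl hjl.symm hij.symm]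
      simp [hil, hjk.symm]

lemma exists_cyclic_labels_card_three_iff :
    (∃ j₀ ∈ S, ∃ j₁ ∈ S, ∃ j₂ ∈ S, ∃ j₃ ∈ S, j₀ ≠ j₁ ∧ j₁ ≠ j₂ ∧ j₂ ≠ j₃ ∧ j₃ ≠ j₀ ∧
        ((j₀ - j₁) + (j₂ - j₃) = 0 ∨ (j₀ - j₁) - (j₂ - j₃) = 0 ∨
          (j₀ - j₁) + 2 * (j₂ - j₃) = 0 ∨ 2 * (j₀ - j₁) + (j₂ - j₃) = 0) ∧
        #{j₀, j₁, j₂, j₃} = 3) ↔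
      ∃ i ∈ S, ∃ j ∈ S, ∃ k ∈ S, i ≠ j ∧ i ≠ k ∧ j ≠ k ∧
        (2 * i + j - 3 * k = 0 ∨ 2 * i - j - k = 0) := by
  constructor
  · rintro ⟨j₀, h₀, j₁, h₁, j₂, h₂, j₃, h₃, h₀₁, h₁₂, h₂₃, h₃₀, hrel, hcard⟩
    rw [card_quadruple_of_cyclic_ne h₀₁ h₁₂ h₂₃ h₃₀] at hcard
    obtain ⟨rfl, h₁₃⟩ | ⟨h₀₂, rfl⟩ : j₀ = j₂ ∧ j₁ ≠ j₃ ∨ j₀ ≠ j₂ ∧ j₁ = j₃ := by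
      split_ifs at hcard <;> simp_all
    · rcases hrel with h | h | h | h
      · exact ⟨j₀, h₀, j₁, h₁, j₃, h₃, h₀₁, h₃₀.symm, h₁₃, Or.inr (by linear_combination h)⟩
      · exact absurd (by linear_combination -h) h₁₃
      · exact ⟨j₃, h₃, j₁, h₁, j₀, h₀, Ne.symm h₁₃, h₃₀, h₀₁.symm,
          Or.inl (by linear_combination -h)⟩
      · exact ⟨j₁, h₁, j₃, h₃, j₀, h₀, h₁₃, h₀₁.symm, h₃₀, Or.inl (by linear_combination -h)⟩
    · rcases hrel with h | h | h | h
      · exact ⟨j₁, h₁, j₀, h₀, j₂, h₂, h₀₁.symm, h₁₂, h₀₂, Or.inr (by linear_combination -h)⟩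
      · exact absurd (by linear_combination h) h₀₂
      · exact ⟨j₂, h₂, j₀, h₀, j₁, h₁, Ne.symm h₀₂, h₁₂.symm, h₀₁, Or.inl (by linear_combination h)⟩
      · exact ⟨j₀, h₀, j₂, h₂, j₁, h₁, h₀₂, h₀₁, h₁₂.symm, Or.inl (by linear_combination h)⟩
  · rintro ⟨i, hi, j, hj, k, hk, hij, hik, hjk, h | h⟩
    · refine ⟨k, hk, i, hi, k, hk, j, hj, hik.symm, hik, hjk.symm, hjk,
        Or.inr (Or.inr (Or.inr (by linear_combination -h))), ?_⟩
      rw [card_quadruple_of_cyclic_ne hik.symm hik hjk.symm hjk]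
      simp [hij]
    · refine ⟨i, hi, j, hj, i, hi, k, hk, hij, hij.symm, hik, hik.symm,
        Or.inl (by linear_combination h), ?_⟩
      rw [card_quadruple_of_cyclic_ne hij hij.symm hik hik.symm]
      simp [hjk]

end Labels

/-- For a (possibly shortened) proper array code with modulus `q`
(an odd prime), three block-rows (labels in arithmetic progression, common
difference `d ≢ 0`, distinct) and retained block-column label set `S`:
the Tanner graph contains a cycle of length eight passing through four distinct
block-columns iff there are four distinct labels `i, j, k, l ∈ S` with
`i - j - k + l ≡ 0` or `2i - j - 2k + l ≡ 0 (mod q)`; and it contains a cycle of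
length eight passing through exactly three distinct block-columns iff there are
three distinct labels `i, j, k ∈ S` with `2i + j - 3k ≡ 0` or
`2i - j - k ≡ 0 (mod q)`. -/
theorem pac_r3_eight_cycles_iff (q : ℕ) (hq : q.Prime) (hqodd : Odd q)
    (a : Fin 3 → ZMod q) (a₀ d : ZMod q) (hd : d ≠ 0)
    (hAP : ∀ i : Fin 3, a i = a₀ + (i : ℕ) * d) (ha : Function.Injective a)
    (S : Finset (ZMod q)) :
    ((∃ (v : (Fin 3 × ZMod q) ⊕ ({j // j ∈ S} × ZMod q))
        (c : (tannerGraph q 3 a S).Walk v v),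
          c.IsCycle ∧ c.length = 8 ∧ (colLabels c.support).card = 4) ↔
      ∃ i ∈ S, ∃ j ∈ S, ∃ k ∈ S, ∃ l ∈ S,
        i ≠ j ∧ i ≠ k ∧ i ≠ l ∧ j ≠ k ∧ j ≠ l ∧ k ≠ l ∧
        (i - j - k + l = 0 ∨ 2 * i - j - 2 * k + l = 0)) ∧
    ((∃ (v : (Fin 3 × ZMod q) ⊕ ({j // j ∈ S} × ZMod q))
        (c : (tannerGraph q 3 a S).Walk v v),
          c.IsCycle ∧ c.length = 8 ∧ (colLabels c.support).card = 3) ↔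
      ∃ i ∈ S, ∃ j ∈ S, ∃ k ∈ S, i ≠ j ∧ i ≠ k ∧ j ≠ k ∧
        (2 * i + j - 3 * k = 0 ∨ 2 * i - j - k = 0)) := by
  have := Fact.mk hq
  have h2 : (2 : ZMod q) ≠ 0 := Ring.two_ne_zero <| by
    rw [ZMod.ringChar_zmod_n]
    rintro rfl
    exact Nat.not_odd_iff_even.mpr even_two hqodd
  rw [exists_isCycle_length_eight_iff ha S (·.card = 4),
    exists_isCycle_length_eight_iff ha S (·.card = 3)]
  simp only [exists_rowTriple_relation_iff hAP hd h2]
  exact ⟨exists_cyclic_labels_card_four_iff, exists_cyclic_labels_card_three_iff⟩
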